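/- Let A = (a_{i,j}) be an n₁ × n₂ matrix with non-negative integer entries that is additive. Then there exist integers x'₁ > x'₂ > … > x'_{n₁} and y'₁ > y'₂ > … > y'_{n₂} which again witness additivity (i.e. a_{i,j} > a_{k,l} implies x'_i + y'_j > x'_k + y'_l for all (i,j), (k,l)) and such that, in addition, the n₁n₂ sums x'_i + y'_j, for (i,j) ∈ {1,…,n₁}×{1,…,n₂}, are pairwise distinct. (This is the paper's claim that the one-parameter subgroup associated to an additive matrix can always be chosen Ĝ-regular.) -/
import Mathlib


open Equiv

/-- The weight lattice `L = ℤ^{n₁} × ℤ^{n₂}` of `GL(n₁) × GL(n₂)`. -/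
abbrev L (n₁ n₂ : ℕ) : Type := (Fin n₁ → ℤ) × (Fin n₂ → ℤ)

/-- The weight lattice `L̂ = ℤ^N` of `GL(N)`. -/
abbrev Lhat (N : ℕ) : Type := Fin N → ℤ

/-- The standard basis vector `ε_a` of the first factor of `L`. -/
def eps {n₁ n₂ : ℕ} (a : Fin n₁) : L n₁ n₂ := (Pi.single a 1, 0)

/-- The standard basis vector `η_c` of the second factor of `L`. -/
def eta {n₁ n₂ : ℕ} (c : Fin n₂) : L n₁ n₂ := (0, Pi.single c 1)

/-- The standard basis vector `ε̂_p` of `L̂`. -/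
def epsHat {N : ℕ} (p : Fin N) : Lhat N := Pi.single p 1

/-- The lexicographic identification of `{1,…,n₁} × {1,…,n₂}` with `{1,…,n₁n₂}`,
`(i,j) ↦ (i-1)n₂ + j` in 1-based terms. -/
def lex {n₁ n₂ : ℕ} (i : Fin n₁) (j : Fin n₂) : Fin (n₁ * n₂) :=
  finProdFinEquiv (i, j)

/-- The action of `W = S_{n₁} × S_{n₂}` on `L`, characterised by
`u • ε_a = ε_{u₁ a}` and `u • η_c = η_{u₂ c}`. -/
def wAct {n₁ n₂ : ℕ} (u : Perm (Fin n₁) × Perm (Fin n₂)) (x : L n₁ n₂) : L n₁ n₂ :=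
  (x.1 ∘ u.1.symm, x.2 ∘ u.2.symm)

/-- The action of `Ŵ = S_N` on `L̂`, characterised by `û • ε̂_p = ε̂_{û p}`. -/
def hatAct {N : ℕ} (u : Perm (Fin N)) (x : Lhat N) : Lhat N := x ∘ u.symm

/-- The positive roots `Φ⁺` of `GL(n₁) × GL(n₂)`. -/
def PhiPos (n₁ n₂ : ℕ) : Set (L n₁ n₂) :=
  {x | ∃ a b : Fin n₁, a < b ∧ x = eps a - eps b} ∪
    {x | ∃ c d : Fin n₂, c < d ∧ x = eta c - eta d}

/-- The negative roots `Φ⁻ = -Φ⁺`. -/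
def PhiNeg (n₁ n₂ : ℕ) : Set (L n₁ n₂) := Neg.neg '' PhiPos n₁ n₂

/-- The inversion set `Φ(u) = Φ⁻ ∩ u · Φ⁺`. -/
def Phi {n₁ n₂ : ℕ} (u : Perm (Fin n₁) × Perm (Fin n₂)) : Set (L n₁ n₂) :=
  PhiNeg n₁ n₂ ∩ wAct u '' PhiPos n₁ n₂

/-- The positive roots `Φ̂⁺` of `GL(N)`. -/
def PhiHatPos (N : ℕ) : Set (Lhat N) :=
  {x | ∃ p q : Fin N, p < q ∧ x = epsHat p - epsHat q}

/-- The negative roots `Φ̂⁻ = -Φ̂⁺`. -/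
def PhiHatNeg (N : ℕ) : Set (Lhat N) := Neg.neg '' PhiHatPos N

/-- The inversion set `Φ̂(û) = Φ̂⁻ ∩ û · Φ̂⁺`. -/
def PhiHat {N : ℕ} (u : Perm (Fin N)) : Set (Lhat N) :=
  PhiHatNeg N ∩ hatAct u '' PhiHatPos N

/-- The longest element `ŵ₀ : k ↦ N + 1 - k` of `S_N`. -/
def w0 (N : ℕ) : Perm (Fin N) := Fin.revPerm

/-- The 3-cycle `(a b c)` sending `a ↦ b ↦ c ↦ a` (permutations composed right-to-left). -/
def cyc {α : Type*} [DecidableEq α] (a b c : α) : Perm α :=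
  Equiv.swap a b * Equiv.swap b c

/-- A matrix `A ∈ M_{n₁,n₂}(ℤ_{≥0})` is additive if there are integers
`x₁ > … > x_{n₁}` and `y₁ > … > y_{n₂}` with `A i j > A k l → x_i + y_j > x_k + y_l`. -/
def IsAdditiveMatrix {n₁ n₂ : ℕ} (A : Fin n₁ → Fin n₂ → ℕ) : Prop :=
  ∃ (x : Fin n₁ → ℤ) (y : Fin n₂ → ℤ), StrictAnti x ∧ StrictAnti y ∧
    ∀ (i : Fin n₁) (j : Fin n₂) (k : Fin n₁) (l : Fin n₂),
      A i j > A k l → x i + y j > x k + y l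

/-- an additive matrix admits additivity witnesses whose `n₁n₂` sums
`x'_i + y'_j` are pairwise distinct (i.e. the associated one-parameter subgroup can be
chosen `Ĝ`-regular). -/
theorem additive_matrix_regular_witness (n₁ n₂ : ℕ) (hn₁ : 0 < n₁) (hn₂ : 0 < n₂)
    (A : Fin n₁ → Fin n₂ → ℕ) (hA : IsAdditiveMatrix A) :
    ∃ (x : Fin n₁ → ℤ) (y : Fin n₂ → ℤ), StrictAnti x ∧ StrictAnti y ∧
      (∀ (i : Fin n₁) (j : Fin n₂) (k : Fin n₁) (l : Fin n₂),
        A i j > A k l → x i + y j > x k + y l) ∧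
      Function.Injective fun p : Fin n₁ × Fin n₂ => x p.1 + y p.2 := by
  obtain ⟨x, y, hx, hy, hxy⟩ := hA
  set M : ℤ := (n₁ : ℤ) * n₂ with hM
  have hMpos : 0 < M := by
    have h1 : (0:ℤ) < n₁ := by exact_mod_cast hn₁
    have h2 : (0:ℤ) < n₂ := by exact_mod_cast hn₂
    positivity
  refine ⟨fun i => M * x i - i, fun j => M * y j - n₁ * j, ?_, ?_, ?_, ?_⟩
  · intro i k hik
    have h1 : x k + 1 ≤ x i := hx hik
    have h2 : M * (x k + 1) ≤ M * x i := by
      exact mul_le_mul_of_nonneg_left h1 hMpos.le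
    have h3 : (i : ℤ) < k := by exact_mod_cast hik
    simp only
    linarith
  · intro j l hjl
    have h1 : y l + 1 ≤ y j := hy hjl
    have h2 : M * (y l + 1) ≤ M * y j := by
      exact mul_le_mul_of_nonneg_left h1 hMpos.le
    have h3 : (j : ℤ) < l := by exact_mod_cast hjl
    have h4 : (n₁ : ℤ) * j ≤ n₁ * l := by
      exact mul_le_mul_of_nonneg_left h3.le (by positivity)
    simp only
    linarith
  · intro i j k l h
    have h1 : x k + y l + 1 ≤ x i + y j := hxy i j k l h
    have h2 : M * (x k + y l + 1) ≤ M * (x i + y j) := by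
      exact mul_le_mul_of_nonneg_left h1 hMpos.le
    have hi : (i : ℤ) ≤ n₁ - 1 := by
      have := i.isLt; omega
    have hj : (j : ℤ) ≤ n₂ - 1 := by
      have := j.isLt; omega
    have hk : (0:ℤ) ≤ k := Int.natCast_nonneg _
    have hl : (0:ℤ) ≤ l := Int.natCast_nonneg _
    have hn₁' : (0:ℤ) < n₁ := by exact_mod_cast hn₁
    have hbound : (i : ℤ) + n₁ * j ≤ M - 1 := by
      have : (n₁:ℤ) * j ≤ n₁ * (n₂ - 1) := mul_le_mul_of_nonneg_left hj hn₁'.le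
      have hMexp : M = (n₁:ℤ) * n₂ := hM
      nlinarith
    have hnl : (0:ℤ) ≤ (n₁:ℤ) * l := by positivity
    simp only
    nlinarith
  · rintro ⟨i, j⟩ ⟨k, l⟩ h
    simp only at h
    have heq : M * ((x i + y j) - (x k + y l)) =
        ((i : ℤ) + n₁ * j) - ((k : ℤ) + n₁ * l) := by linear_combination h
    have hi : (i : ℤ) < n₁ := by exact_mod_cast i.isLt
    have hj : (j : ℤ) < n₂ := by exact_mod_cast j.isLt
    have hk : (k : ℤ) < n₁ := by exact_mod_cast k.isLt
    have hl : (l : ℤ) < n₂ := by exact_mod_cast l.isLt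
    have hi0 : (0:ℤ) ≤ i := Int.natCast_nonneg _
    have hj0 : (0:ℤ) ≤ j := Int.natCast_nonneg _
    have hk0 : (0:ℤ) ≤ k := Int.natCast_nonneg _
    have hl0 : (0:ℤ) ≤ l := Int.natCast_nonneg _
    have hn₁' : (0:ℤ) < n₁ := by exact_mod_cast hn₁
    have hub1 : (i : ℤ) + n₁ * j ≤ M - 1 := by
      have h1 : (j:ℤ) ≤ n₂ - 1 := by omega
      have : (n₁:ℤ) * j ≤ n₁ * (n₂ - 1) := mul_le_mul_of_nonneg_left h1 hn₁'.le
      nlinarith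
    have hub2 : (k : ℤ) + n₁ * l ≤ M - 1 := by
      have h1 : (l:ℤ) ≤ n₂ - 1 := by omega
      have : (n₁:ℤ) * l ≤ n₁ * (n₂ - 1) := mul_le_mul_of_nonneg_left h1 hn₁'.le
      nlinarith
    have hlb1 : (0:ℤ) ≤ (i : ℤ) + n₁ * j := by positivity
    have hlb2 : (0:ℤ) ≤ (k : ℤ) + n₁ * l := by positivity
    -- deduce the scaled difference is zero
    have hs0 : (x i + y j) - (x k + y l) = 0 := by
      by_contra hne
      rcases lt_or_gt_of_ne hne with hlt | hgt
      · have : (x i + y j) - (x k + y l) ≤ -1 := by omega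
        have : M * ((x i + y j) - (x k + y l)) ≤ M * (-1) :=
          mul_le_mul_of_nonneg_left this hMpos.le
        linarith
      · have : 1 ≤ (x i + y j) - (x k + y l) := by omega
        have : M * 1 ≤ M * ((x i + y j) - (x k + y l)) :=
          mul_le_mul_of_nonneg_left this hMpos.le
        linarith
    have hD : (i : ℤ) + n₁ * j = (k : ℤ) + n₁ * l := by
      rw [hs0, mul_zero] at heq; linarith
    -- from hD deduce j = l then i = k
    clear heq h hs0
    have hjl : j = l := by
      by_contra hne
      rcases lt_or_gt_of_ne hne with hlt | hgt
      · have h1 : (j:ℤ) + 1 ≤ l := by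
          have : (j:ℤ) < l := by exact_mod_cast hlt
          omega
        have h2 : (n₁:ℤ) * ((j:ℤ) + 1) ≤ n₁ * l := mul_le_mul_of_nonneg_left h1 hn₁'.le
        have h3 : (n₁:ℤ) * ((j:ℤ) + 1) = n₁ * j + n₁ := by ring
        linarith
      · have h1 : (l:ℤ) + 1 ≤ j := by
          have : (l:ℤ) < j := by exact_mod_cast hgt
          omega
        have h2 : (n₁:ℤ) * ((l:ℤ) + 1) ≤ n₁ * j := mul_le_mul_of_nonneg_left h1 hn₁'.le
        have h3 : (n₁:ℤ) * ((l:ℤ) + 1) = n₁ * l + n₁ := by ring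
        linarith
    subst hjl
    have hik : i = k := by
      have h2 : (i:ℤ) = k := by linarith
      have h3 : (i:ℕ) = (k:ℕ) := by exact_mod_cast h2
      exact Fin.ext h3
    rw [hik]
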